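/- The algebraic sandwiched Rényi relative entropy dominates the classical Rényi relative entropy of the block probability distributions: in the block setup, for every n > 1, (n−1)⁻¹ · log [ Σ_α p_α^n q_α^{1−n} · exp((n−1) S_n(ρ_{a_α} ‖ σ_{a_α})) ] ≥ (n−1)⁻¹ · log [ Σ_α p_α^n q_α^{1−n} ], with equality if and only if ρ_{a_α} = σ_{a_α} for all α. -/

import Mathlib

open Matrix
open scoped Kronecker ComplexOrder

/-- Real power of a Hermitian matrix via the spectral functional calculus
(junk value `0` on non-Hermitian matrices). -/
noncomputable def mpow {m : Type*} [Fintype m] [DecidableEq m]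
    (A : Matrix m m ℂ) (r : ℝ) : Matrix m m ℂ :=
  if hA : A.IsHermitian then
    (hA.eigenvectorUnitary : Matrix m m ℂ) *
      Matrix.diagonal (fun i => ((hA.eigenvalues i ^ r : ℝ) : ℂ)) *
      (star (hA.eigenvectorUnitary : Matrix m m ℂ))
  else 0

/-- Logarithm of a Hermitian matrix via the spectral functional calculus
(junk value `0` on non-Hermitian matrices). -/
noncomputable def mlog {m : Type*} [Fintype m] [DecidableEq m]
    (A : Matrix m m ℂ) : Matrix m m ℂ :=
  if hA : A.IsHermitian then
    (hA.eigenvectorUnitary : Matrix m m ℂ) *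
      Matrix.diagonal (fun i => ((Real.log (hA.eigenvalues i) : ℝ) : ℂ)) *
      (star (hA.eigenvectorUnitary : Matrix m m ℂ))
  else 0

/-- A density matrix: positive semidefinite with unit trace. -/
def IsDensity {m : Type*} [Fintype m] [DecidableEq m] (A : Matrix m m ℂ) : Prop :=
  A.PosSemidef ∧ A.trace = 1

/-- Sandwiched Rényi relative entropy
`S_n(ρ‖σ) = (n-1)⁻¹ log Tr[(σ^{(1-n)/(2n)} ρ σ^{(1-n)/(2n)})^n]`. -/
noncomputable def SRenyi {m : Type*} [Fintype m] [DecidableEq m]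
    (n : ℝ) (ρ σ : Matrix m m ℂ) : ℝ :=
  (n - 1)⁻¹ *
    Real.log ((mpow (mpow σ ((1 - n) / (2 * n)) * ρ * mpow σ ((1 - n) / (2 * n))) n).trace.re)

/-- Quantum relative entropy `S(ρ‖σ) = Tr(ρ log ρ) - Tr(ρ log σ)`. -/
noncomputable def relEnt {m : Type*} [Fintype m] [DecidableEq m]
    (ρ σ : Matrix m m ℂ) : ℝ :=
  ((ρ * mlog ρ).trace - (ρ * mlog σ).trace).re

/-- von Neumann entropy `S(τ) = -Tr(τ log τ)`. -/
noncomputable def vnEnt {m : Type*} [Fintype m] [DecidableEq m]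
    (τ : Matrix m m ℂ) : ℝ :=
  -((τ * mlog τ).trace.re)

/-! For each block put `Q_n(ρ‖σ) = Tr[(σ^γ ρ σ^γ)^n]` with `γ = (1 - n) / (2n)`, so that
`exp((n - 1) S_n(ρ‖σ)) = Q_n(ρ‖σ)` and the algebraic sum is the classical one with every
weight `p_α^n q_α^(1-n)` multiplied by `Q_n(ρ_α‖σ_α)`. It therefore suffices that
`Q_n(ρ‖σ) ≥ 1`, with equality only for `ρ = σ`.

This is the trace Young inequality `Tr(AB) ≤ Tr(A^n)/n + Tr(B^n')/n'` for `A = σ^γ ρ σ^γ` and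
`B = σ^(1/n')`, where `Tr(AB) = Tr ρ = 1` and `B^n' = σ`; in the equality case
`A^n = B^n' = σ`, which unwinds to `ρ = σ`. The trace Young inequality reduces to the scalar
one: in eigenbases `Tr(AB) = ∑ a_i b_j |W_ij|²` for the unitary `W = U* V`, and `(|W_ij|²)` is
doubly stochastic. -/

section

variable {m : Type*} [Fintype m] [DecidableEq m]

section MatrixPower

open scoped MatrixOrder

variable {A : Matrix m m ℂ}

lemma mpow_eq_cfc (hA : A.IsHermitian) (r : ℝ) :
    mpow A r = cfc (· ^ r : ℝ → ℝ) A := by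
  rw [hA.cfc_eq, mpow, dif_pos hA]
  rfl

lemma mpow_eq_conj_diagonal (hA : A.IsHermitian) (r : ℝ) :
    mpow A r = (hA.eigenvectorUnitary : Matrix m m ℂ) *
      diagonal (fun i => ((hA.eigenvalues i ^ r : ℝ) : ℂ)) *
        star (hA.eigenvectorUnitary : Matrix m m ℂ) :=
  dif_pos hA

lemma isHermitian_mpow (hA : A.IsHermitian) (r : ℝ) :
    (mpow A r).IsHermitian := by
  rw [mpow_eq_cfc hA]
  exact cfc_predicate _ A

lemma posSemidef_mpow (hA : A.PosSemidef) (r : ℝ) :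
    (mpow A r).PosSemidef := by
  rw [mpow_eq_conj_diagonal hA.1, star_eq_conjTranspose]
  refine PosSemidef.mul_mul_conjTranspose_same (posSemidef_diagonal_iff.mpr fun i => ?_) _
  exact_mod_cast Real.rpow_nonneg (hA.eigenvalues_nonneg i) r

lemma re_trace_mpow (hA : A.IsHermitian) (r : ℝ) :
    (mpow A r).trace.re = ∑ i, hA.eigenvalues i ^ r := by
  rw [mpow_eq_conj_diagonal hA, trace_mul_cycle, Unitary.coe_star_mul_self, one_mul,
    trace_diagonal, Complex.re_sum]
  rfl

lemma mpow_add (hA : A.PosDef) (r s : ℝ) :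
    mpow A (r + s) = mpow A r * mpow A s := by
  simp only [mpow_eq_cfc hA.1]
  rw [← cfc_mul _ _ A ((Set.toFinite _).continuousOn _) ((Set.toFinite _).continuousOn _)]
  exact cfc_congr fun x hx => Real.rpow_add (hA.isStrictlyPositive.spectrum_pos hx) r s

lemma mpow_zero (hA : A.IsHermitian) : mpow A 0 = 1 := by
  rw [mpow_eq_cfc hA, cfc_congr fun x _ => Real.rpow_zero x, cfc_const_one ℝ A]

lemma mpow_one (hA : A.IsHermitian) : mpow A 1 = A := by
  rw [mpow_eq_cfc hA, cfc_congr fun x _ => Real.rpow_one x, cfc_id' ℝ A]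

lemma mpow_mpow (hA : A.PosSemidef) (r s : ℝ) :
    mpow (mpow A r) s = mpow A (r * s) := by
  rw [mpow_eq_cfc (isHermitian_mpow hA.1 r), mpow_eq_cfc hA.1, mpow_eq_cfc hA.1,
    ← cfc_comp' (· ^ s : ℝ → ℝ) (· ^ r : ℝ → ℝ) A ((Set.toFinite _).continuousOn _)
      ((Set.toFinite _).continuousOn _) hA.1.isSelfAdjoint]
  exact cfc_congr fun x hx => (Real.rpow_mul (spectrum_nonneg_of_nonneg hA.nonneg hx) r s).symm

end MatrixPower

section ConjDiagonal

lemma sum_normSq_row_of_mem_unitary {W : Matrix m m ℂ} (hW : W ∈ unitary (Matrix m m ℂ))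
    (i : m) : ∑ j, Complex.normSq (W i j) = 1 := by
  have h : (W * star W) i i = (1 : Matrix m m ℂ) i i := by rw [Unitary.mul_star_self_of_mem hW]
  simp only [mul_apply, star_apply, Complex.star_def, Complex.mul_conj, one_apply_eq] at h
  exact_mod_cast h

lemma normSq_mem_doublyStochastic_of_mem_unitary {W : Matrix m m ℂ}
    (hW : W ∈ unitary (Matrix m m ℂ)) :
    of (fun i j => Complex.normSq (W i j)) ∈ doublyStochastic ℝ m := by
  refine mem_doublyStochastic_iff_sum.mpr
    ⟨fun i j => Complex.normSq_nonneg _, sum_normSq_row_of_mem_unitary hW, fun j => ?_⟩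
  simpa [star_apply] using sum_normSq_row_of_mem_unitary (Unitary.star_mem hW) j

lemma sum_sum_add_mul_of_mem_doublyStochastic {d : Matrix m m ℝ}
    (hd : d ∈ doublyStochastic ℝ m) (f g : m → ℝ) :
    ∑ i, ∑ j, (f i + g j) * d i j = ∑ i, f i + ∑ j, g j := by
  simp only [add_mul, Finset.sum_add_distrib]
  rw [Finset.sum_comm (f := fun i j => g j * d i j)]
  simp only [← Finset.mul_sum, sum_row_of_mem_doublyStochastic hd,
    sum_col_of_mem_doublyStochastic hd, mul_one]

lemma re_trace_diagonal_mul_diagonal_mul_star (W : Matrix m m ℂ) (a b : m → ℝ) :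
    (diagonal (fun i => (a i : ℂ)) * W * diagonal (fun j => (b j : ℂ)) * star W).trace.re =
      ∑ i, ∑ j, a i * b j * Complex.normSq (W i j) := by
  rw [trace, Complex.re_sum]
  refine Finset.sum_congr rfl fun i _ => ?_
  rw [diag_apply, mul_apply, Complex.re_sum]
  refine Finset.sum_congr rfl fun j _ => ?_
  rw [mul_diagonal, diagonal_mul, star_apply, Complex.star_def,
    ← Complex.ofReal_re (a i * b j * _)]
  congr 1
  push_cast
  rw [← Complex.mul_conj]
  ring

lemma re_trace_conj_diagonal_mul_conj_diagonal (U V : Matrix m m ℂ) (a b : m → ℝ) :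
    (U * diagonal (fun i => (a i : ℂ)) * star U *
      (V * diagonal (fun j => (b j : ℂ)) * star V)).trace.re =
    ∑ i, ∑ j, a i * b j * Complex.normSq ((star U * V) i j) := by
  rw [← re_trace_diagonal_mul_diagonal_mul_star, StarMul.star_mul, star_star]
  simp only [Matrix.mul_assoc]
  rw [trace_mul_comm U]
  simp only [Matrix.mul_assoc]

lemma conj_diagonal_eq_conj_diagonal {U V : Matrix m m ℂ}
    (hU : U ∈ unitary (Matrix m m ℂ)) (hV : V ∈ unitary (Matrix m m ℂ)) {x y : m → ℂ}
    (h : ∀ i j, (star U * V) i j ≠ 0 → x i = y j) :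
    U * diagonal x * star U = V * diagonal y * star V := by
  set W := star U * V
  have hUW : U * W = V := by
    rw [← Matrix.mul_assoc, Unitary.mul_star_self_of_mem hU, Matrix.one_mul]
  have hWW : W * star W = 1 :=
    Unitary.mul_star_self_of_mem (mul_mem (Unitary.star_mem hU) hV)
  have hcomm : diagonal x * W = W * diagonal y := by
    ext i j
    rw [diagonal_mul, mul_diagonal]
    by_cases hij : W i j = 0
    · simp [hij]
    · rw [h i j hij, mul_comm]
  calc U * diagonal x * star U = U * (diagonal x * W) * star (U * W) := by
        rw [StarMul.star_mul]
        simp only [Matrix.mul_assoc]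
        rw [← Matrix.mul_assoc W, hWW, Matrix.one_mul]
    _ = V * diagonal y * star V := by
        rw [hcomm, ← Matrix.mul_assoc, hUW]

end ConjDiagonal

section TraceYoung

variable {A B : Matrix m m ℂ}

noncomputable def eigenOverlap (hA : A.IsHermitian) (hB : B.IsHermitian) : Matrix m m ℝ :=
  of fun i j =>
    Complex.normSq ((star (hA.eigenvectorUnitary : Matrix m m ℂ) * hB.eigenvectorUnitary) i j)

lemma eigenOverlap_mem_doublyStochastic (hA : A.IsHermitian) (hB : B.IsHermitian) :
    eigenOverlap hA hB ∈ doublyStochastic ℝ m :=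
  normSq_mem_doublyStochastic_of_mem_unitary
    (mul_mem (Unitary.star_mem hA.eigenvectorUnitary.2) hB.eigenvectorUnitary.2)

lemma re_trace_mul_eq_sum_eigenOverlap (hA : A.IsHermitian) (hB : B.IsHermitian) :
    (A * B).trace.re =
      ∑ i, ∑ j, hA.eigenvalues i * hB.eigenvalues j * eigenOverlap hA hB i j := by
  conv_lhs => rw [hA.spectral_theorem, hB.spectral_theorem]
  exact re_trace_conj_diagonal_mul_conj_diagonal _ _ _ _

lemma inv_mul_re_trace_mpow_add_eq_sum_eigenOverlap (hA : A.IsHermitian) (hB : B.IsHermitian)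
    (p q : ℝ) :
    p⁻¹ * (mpow A p).trace.re + q⁻¹ * (mpow B q).trace.re =
      ∑ i, ∑ j, (hA.eigenvalues i ^ p / p + hB.eigenvalues j ^ q / q) *
        eigenOverlap hA hB i j := by
  rw [sum_sum_add_mul_of_mem_doublyStochastic (eigenOverlap_mem_doublyStochastic hA hB),
    re_trace_mpow hA, re_trace_mpow hB, Finset.mul_sum, Finset.mul_sum]
  simp only [div_eq_inv_mul]

variable {p q : ℝ}

lemma mul_mul_eigenOverlap_le (hA : A.PosSemidef) (hB : B.PosSemidef)
    (hpq : p.HolderConjugate q) (i j : m) :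
    hA.1.eigenvalues i * hB.1.eigenvalues j * eigenOverlap hA.1 hB.1 i j ≤
      (hA.1.eigenvalues i ^ p / p + hB.1.eigenvalues j ^ q / q) * eigenOverlap hA.1 hB.1 i j :=
  mul_le_mul_of_nonneg_right
    (Real.young_inequality_of_nonneg (hA.eigenvalues_nonneg i) (hB.eigenvalues_nonneg j) hpq)
    (Complex.normSq_nonneg _)

theorem re_trace_mul_le_young (hA : A.PosSemidef) (hB : B.PosSemidef)
    (hpq : p.HolderConjugate q) :
    (A * B).trace.re ≤ p⁻¹ * (mpow A p).trace.re + q⁻¹ * (mpow B q).trace.re := by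
  rw [re_trace_mul_eq_sum_eigenOverlap hA.1 hB.1,
    inv_mul_re_trace_mpow_add_eq_sum_eigenOverlap hA.1 hB.1]
  exact Finset.sum_le_sum fun i _ => Finset.sum_le_sum fun j _ =>
    mul_mul_eigenOverlap_le hA hB hpq i j

theorem mpow_eq_mpow_of_re_trace_mul_eq (hA : A.PosSemidef) (hB : B.PosSemidef)
    (hpq : p.HolderConjugate q)
    (h : (A * B).trace.re = p⁻¹ * (mpow A p).trace.re + q⁻¹ * (mpow B q).trace.re) :
    mpow A p = mpow B q := by
  rw [re_trace_mul_eq_sum_eigenOverlap hA.1 hB.1,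
    inv_mul_re_trace_mpow_add_eq_sum_eigenOverlap hA.1 hB.1] at h
  have hle := mul_mul_eigenOverlap_le hA hB hpq
  have heq : ∀ i j, hA.1.eigenvalues i * hB.1.eigenvalues j * eigenOverlap hA.1 hB.1 i j =
      (hA.1.eigenvalues i ^ p / p + hB.1.eigenvalues j ^ q / q) * eigenOverlap hA.1 hB.1 i j :=
    fun i j => (Finset.sum_eq_sum_iff_of_le fun j _ => hle i j).mp
      ((Finset.sum_eq_sum_iff_of_le fun i _ => Finset.sum_le_sum fun j _ => hle i j).mp h i
        (Finset.mem_univ i)) j (Finset.mem_univ j)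
  rw [mpow_eq_conj_diagonal hA.1, mpow_eq_conj_diagonal hB.1]
  refine conj_diagonal_eq_conj_diagonal hA.1.eigenvectorUnitary.2 hB.1.eigenvectorUnitary.2
    fun i j hij => ?_
  have hd : eigenOverlap hA.1 hB.1 i j ≠ 0 := Complex.normSq_eq_zero.not.mpr hij
  exact congrArg _ ((Real.young_inequality_eq_iff_of_nonneg (hA.eigenvalues_nonneg i)
    (hB.eigenvalues_nonneg j) hpq).mp (mul_right_cancel₀ hd (heq i j)))

end TraceYoung

section Sandwiched

variable {ρ σ : Matrix m m ℂ} {n : ℝ}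

noncomputable def sandwichedTrace (n : ℝ) (ρ σ : Matrix m m ℂ) : ℝ :=
  (mpow (mpow σ ((1 - n) / (2 * n)) * ρ * mpow σ ((1 - n) / (2 * n))) n).trace.re

lemma mpow_mul_mpow_cancel (hσ : σ.PosDef) (r : ℝ) : mpow σ r * mpow σ (-r) = 1 := by
  rw [← mpow_add hσ, add_neg_cancel, mpow_zero hσ.1]

lemma eq_mpow_of_mpow_mul_mul_mpow_eq (hσ : σ.PosDef) {r s : ℝ}
    (h : mpow σ r * ρ * mpow σ r = mpow σ s) : ρ = mpow σ (s - 2 * r) := by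
  have hneg : mpow σ (-r) * mpow σ r = 1 := by simpa using mpow_mul_mpow_cancel hσ (-r)
  calc ρ = mpow σ (-r) * (mpow σ r * ρ * mpow σ r) * mpow σ (-r) := by
        simp only [Matrix.mul_assoc, mpow_mul_mpow_cancel hσ, Matrix.mul_one]
        rw [← Matrix.mul_assoc, hneg, Matrix.one_mul]
    _ = mpow σ (s - 2 * r) := by
        rw [h, ← mpow_add hσ, ← mpow_add hσ]
        ring_nf

lemma posSemidef_mpow_mul_mul_mpow (hρ : ρ.PosSemidef) (hσ : σ.IsHermitian) (r : ℝ) :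
    (mpow σ r * ρ * mpow σ r).PosSemidef := by
  simpa only [(isHermitian_mpow hσ r).eq] using hρ.mul_mul_conjTranspose_same (mpow σ r)

lemma sandwichedTrace_self (hσ : σ.PosDef) (hn : n ≠ 0) :
    sandwichedTrace n σ σ = σ.trace.re := by
  have hmid : mpow σ ((1 - n) / (2 * n)) * σ * mpow σ ((1 - n) / (2 * n)) = mpow σ n⁻¹ := by
    conv_lhs => enter [1, 2]; rw [← mpow_one hσ.1]
    rw [← mpow_add hσ, ← mpow_add hσ]
    congr 1
    field_simp
    ring
  rw [sandwichedTrace, hmid, mpow_mpow hσ.posSemidef, inv_mul_cancel₀ hn, mpow_one hσ.1]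

lemma re_trace_sandwich_mul_mpow (hσ : σ.PosDef) (hn : n ≠ 0) :
    (mpow σ ((1 - n) / (2 * n)) * ρ * mpow σ ((1 - n) / (2 * n)) * mpow σ ((n - 1) / n)).trace =
      ρ.trace := by
  rw [Matrix.mul_assoc, ← mpow_add hσ, trace_mul_cycle, ← mpow_add hσ,
    show (1 - n) / (2 * n) + (n - 1) / n + (1 - n) / (2 * n) = 0 by field_simp; ring,
    mpow_zero hσ.1, Matrix.one_mul]

lemma mpow_mpow_conjExponent (hσ : σ.PosDef) (hn₀ : n ≠ 0) (hn₁ : n ≠ 1) :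
    mpow (mpow σ ((n - 1) / n)) n.conjExponent = σ := by
  have : n - 1 ≠ 0 := sub_ne_zero.mpr hn₁
  rw [mpow_mpow hσ.posSemidef, Real.conjExponent, show (n - 1) / n * (n / (n - 1)) = 1 by
    field_simp, mpow_one hσ.1]

theorem one_le_sandwichedTrace (hρ : IsDensity ρ) (hσ : σ.PosDef) (hσ₁ : σ.trace = 1)
    (hn : 1 < n) : 1 ≤ sandwichedTrace n ρ σ := by
  have hn₀ : 0 < n := zero_lt_one.trans hn
  have hyoung := re_trace_mul_le_young
    (posSemidef_mpow_mul_mul_mpow hρ.1 hσ.1 ((1 - n) / (2 * n)))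
    (posSemidef_mpow hσ.posSemidef ((n - 1) / n)) (Real.HolderConjugate.conjExponent hn)
  rw [re_trace_sandwich_mul_mpow hσ hn₀.ne', mpow_mpow_conjExponent hσ hn₀.ne' hn.ne', hρ.2,
    hσ₁, Complex.one_re, mul_one] at hyoung
  have hconj := (Real.HolderConjugate.conjExponent hn).inv_add_inv_eq_one
  refine le_of_mul_le_mul_left (a := n⁻¹) ?_ (inv_pos.mpr hn₀)
  rw [sandwichedTrace]
  linarith

theorem eq_of_sandwichedTrace_eq_one (hρ : IsDensity ρ) (hσ : σ.PosDef) (hσ₁ : σ.trace = 1)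
    (hn : 1 < n) (h : sandwichedTrace n ρ σ = 1) : ρ = σ := by
  have hn₀ : n ≠ 0 := (zero_lt_one.trans hn).ne'
  set γ := (1 - n) / (2 * n)
  have hpq := Real.HolderConjugate.conjExponent hn
  have hA := posSemidef_mpow_mul_mul_mpow hρ.1 hσ.1 γ
  have hQ : (mpow (mpow σ γ * ρ * mpow σ γ) n).trace.re = 1 := h
  have hAn : mpow (mpow σ γ * ρ * mpow σ γ) n = σ := by
    refine (mpow_eq_mpow_of_re_trace_mul_eq hA (posSemidef_mpow hσ.posSemidef ((n - 1) / n))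
      hpq ?_).trans (mpow_mpow_conjExponent hσ hn₀ hn.ne')
    rw [re_trace_sandwich_mul_mpow hσ hn₀, mpow_mpow_conjExponent hσ hn₀ hn.ne', hρ.2,
      hσ₁, Complex.one_re, mul_one, hQ, mul_one, hpq.inv_add_inv_eq_one]
  have hA' : mpow σ γ * ρ * mpow σ γ = mpow σ n⁻¹ := by
    calc mpow σ γ * ρ * mpow σ γ = mpow (mpow (mpow σ γ * ρ * mpow σ γ) n) n⁻¹ := by
          rw [mpow_mpow hA, mul_inv_cancel₀ hn₀, mpow_one hA.1]
      _ = mpow σ n⁻¹ := by rw [hAn]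
  have hγ : n⁻¹ - 2 * γ = 1 := by
    simp only [γ]
    field_simp
    ring
  rw [eq_mpow_of_mpow_mul_mul_mpow_eq hσ hA', hγ, mpow_one hσ.1]

lemma exp_mul_sRenyi (hn : n ≠ 1) (hQ : 0 < sandwichedTrace n ρ σ) :
    Real.exp ((n - 1) * SRenyi n ρ σ) = sandwichedTrace n ρ σ := by
  rw [SRenyi, ← mul_assoc, mul_inv_cancel₀ (sub_ne_zero.mpr hn), one_mul]
  exact Real.exp_log hQ

end Sandwiched

end

lemma sum_mul_eq_sum_iff_of_one_le {ι : Type*} [Fintype ι] {c t : ι → ℝ}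
    (hc : ∀ i, 0 < c i) (ht : ∀ i, 1 ≤ t i) :
    ∑ i, c i * t i = ∑ i, c i ↔ ∀ i, t i = 1 := by
  rw [eq_comm, Finset.sum_eq_sum_iff_of_le fun i _ => le_mul_of_one_le_right (hc i).le (ht i)]
  simp [eq_comm (a := c _), mul_eq_left₀ (hc _).ne']

theorem srenyi_alg_ge_classical_general {ι : Type*} [Fintype ι] (da : ι → ℕ)
    (p q : ι → ℝ) (hp : ∀ α, 0 < p α) (hp1 : ∑ α, p α = 1)
    (hq : ∀ α, 0 < q α)
    (ρ σ : ∀ α, Matrix (Fin (da α)) (Fin (da α)) ℂ)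
    (hρ : ∀ α, IsDensity (ρ α)) (hσ : ∀ α, IsDensity (σ α))
    (hσpd : ∀ α, (σ α).PosDef)
    (n : ℝ) (hn : 1 < n) :
    (n - 1)⁻¹ *
        Real.log (∑ α, p α ^ n * q α ^ (1 - n) * Real.exp ((n - 1) * SRenyi n (ρ α) (σ α))) ≥
      (n - 1)⁻¹ * Real.log (∑ α, p α ^ n * q α ^ (1 - n)) ∧
    ((n - 1)⁻¹ *
        Real.log (∑ α, p α ^ n * q α ^ (1 - n) * Real.exp ((n - 1) * SRenyi n (ρ α) (σ α))) =
      (n - 1)⁻¹ * Real.log (∑ α, p α ^ n * q α ^ (1 - n)) ↔ ∀ α, ρ α = σ α) := by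
  set c : ι → ℝ := fun α => p α ^ n * q α ^ (1 - n)
  have hc : ∀ α, 0 < c α := fun α =>
    mul_pos (Real.rpow_pos_of_pos (hp α) n) (Real.rpow_pos_of_pos (hq α) _)
  have hQ : ∀ α, 1 ≤ sandwichedTrace n (ρ α) (σ α) := fun α =>
    one_le_sandwichedTrace (hρ α) (hσpd α) (hσ α).2 hn
  have hsum : ∑ α, c α * Real.exp ((n - 1) * SRenyi n (ρ α) (σ α)) =
      ∑ α, c α * sandwichedTrace n (ρ α) (σ α) :=
    Finset.sum_congr rfl fun α _ => by
      rw [exp_mul_sRenyi hn.ne' (zero_lt_one.trans_le (hQ α))]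
  have hpos : 0 < ∑ α, c α :=
    Finset.sum_pos (fun α _ => hc α) (Finset.nonempty_of_sum_ne_zero (hp1 ▸ one_ne_zero))
  have hle : ∑ α, c α ≤ ∑ α, c α * sandwichedTrace n (ρ α) (σ α) :=
    Finset.sum_le_sum fun α _ => le_mul_of_one_le_right (hc α).le (hQ α)
  rw [hsum]
  refine ⟨mul_le_mul_of_nonneg_left (Real.log_le_log hpos hle)
    (inv_nonneg.mpr (sub_nonneg.mpr hn.le)), ?_⟩
  rw [mul_right_inj' (inv_ne_zero (sub_ne_zero.mpr hn.ne')),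
    Real.log_injOn_pos.eq_iff (hpos.trans_le hle) hpos, sum_mul_eq_sum_iff_of_one_le hc hQ]
  refine forall_congr' fun α =>
    ⟨eq_of_sandwichedTrace_eq_one (hρ α) (hσpd α) (hσ α).2 hn, fun hρσ => ?_⟩
  rw [hρσ, sandwichedTrace_self (hσpd α) (zero_lt_one.trans hn).ne', (hσ α).2, Complex.one_re]

/-- the algebraic sandwiched Rényi relative entropy dominates the classical
Rényi relative entropy of the block probability distributions, with equality iff all
`ρ_{a_α} = σ_{a_α}`. -/
theorem srenyi_alg_ge_classical {ι : Type*} [Fintype ι] (da : ι → ℕ)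
    (p q : ι → ℝ) (hp : ∀ α, 0 < p α) (hp1 : ∑ α, p α = 1)
    (hq : ∀ α, 0 < q α) (hq1 : ∑ α, q α = 1)
    (ρ σ : ∀ α, Matrix (Fin (da α)) (Fin (da α)) ℂ)
    (hρ : ∀ α, IsDensity (ρ α)) (hσ : ∀ α, IsDensity (σ α))
    (hσpd : ∀ α, (σ α).PosDef)
    (n : ℝ) (hn : 1 < n) :
    (n - 1)⁻¹ *
        Real.log (∑ α, p α ^ n * q α ^ (1 - n) * Real.exp ((n - 1) * SRenyi n (ρ α) (σ α))) ≥
      (n - 1)⁻¹ * Real.log (∑ α, p α ^ n * q α ^ (1 - n)) ∧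
    ((n - 1)⁻¹ *
        Real.log (∑ α, p α ^ n * q α ^ (1 - n) * Real.exp ((n - 1) * SRenyi n (ρ α) (σ α))) =
      (n - 1)⁻¹ * Real.log (∑ α, p α ^ n * q α ^ (1 - n)) ↔ ∀ α, ρ α = σ α) :=
  srenyi_alg_ge_classical_general da p q hp hp1 hq ρ σ hρ hσ hσpd n hn
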